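/- arXiv:1711.07109 — 3 statements merged into one kernel-verified Lean document; each statement's English description precedes it below -/
import Mathlib

section
/- (Hopf's Lemma, possibly sign-changing zeroth order coefficient.) Let Ω ⊂ ℝⁿ be open, let c : Ω → ℝ be continuous and bounded, and let u ∈ C²(Ω) ∩ C¹(closure(Ω)) satisfy Δu(x) + c(x)u(x) ≥ 0 for all x ∈ Ω and u(x) < 0 for all x ∈ Ω. Suppose x₀ ∈ ∂Ω with u(x₀) = 0 and there exist y ∈ Ω and ρ > 0 such that the open ball B_ρ(y) is contained in Ω and x₀ ∈ ∂B_ρ(y). Then the directional derivative of u at x₀ in the direction ν = (x₀ − y)/ρ is strictly positive: ∂u/∂ν(x₀) > 0. -/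
/-!
Compare `u` on the annulus `ρ/2 ≤ |z - y| ≤ ρ` with `u + ε w`, where
`w z = exp (-α |z - y|²) - exp (-α ρ²)` vanishes on the outer sphere. For `α` large,
`Δw > M w` on the annulus with `M` a bound for `c⁻`, so at a point where `u + ε w > 0` the
equation for `u` forces `Δ(u + ε w) > 0`, and `u + ε w` has no positive interior maximum. Choosing
`ε` so small that `u + ε w ≤ 0` on the inner sphere, the maximum principle gives `u + ε w ≤ 0` on
the annulus, with equality at `x₀`. Hence the derivative of `u + ε w` at `x₀` in the inward
direction is `≤ 0`, and `∂u/∂ν(x₀) ≥ -ε ∂w/∂ν(x₀) = 2εαρ exp (-α ρ²) > 0`.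
-/

open Metric Set

/-- The Laplacian `Δu(x) = ∑ ∂²u/∂xᵢ²` of a function on Euclidean space. -/
noncomputable def lapl {n : ℕ} (u : EuclideanSpace ℝ (Fin n) → ℝ)
    (x : EuclideanSpace ℝ (Fin n)) : ℝ :=
  ∑ i : Fin n,
    iteratedFDeriv ℝ 2 u x ![EuclideanSpace.single i 1, EuclideanSpace.single i 1]

open Filter Topology Real InnerProductSpace Laplacian

theorem lapl_eq_laplacian {n : ℕ} (u : EuclideanSpace ℝ (Fin n) → ℝ) : lapl u = Δ u := by
  rw [laplacian_eq_iteratedFDeriv_orthonormalBasis u (EuclideanSpace.basisFun (Fin n) ℝ)]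
  ext x
  simp [lapl]

theorem IsLocalMax.deriv_deriv_nonpos {f : ℝ → ℝ} {a : ℝ} (h : IsLocalMax f a)
    (hc : ContinuousAt f a) : deriv (deriv f) a ≤ 0 := by
  by_contra! hpos
  have hmin : IsLocalMin f a := isLocalMin_of_deriv_deriv_pos hpos h.deriv_eq_zero hc
  have hconst : f =ᶠ[𝓝 a] fun _ => f a :=
    (Filter.Eventually.and h hmin).mono fun x hx => le_antisymm hx.1 hx.2
  rw [hconst.deriv.deriv_eq] at hpos
  simp at hpos

section NormedSpace

variable {E : Type*} [NormedAddCommGroup E] [NormedSpace ℝ E]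

theorem ContDiffAt.iteratedFDeriv_two_apply_self {f : E → ℝ} {x : E} (hf : ContDiffAt ℝ 2 f x)
    (e : E) : iteratedFDeriv ℝ 2 f x ![e, e] = deriv (deriv fun t : ℝ => f (x + t • e)) 0 := by
  have hline (t : ℝ) : HasDerivAt (fun t : ℝ => x + t • e) e t := by
    simpa using ((hasDerivAt_id t).smul_const e).const_add x
  have hnear : ∀ᶠ t in 𝓝 (0 : ℝ), ContDiffAt ℝ 2 f (x + t • e) := by
    have hto : Tendsto (fun t : ℝ => x + t • e) (𝓝 0) (𝓝 x) := by
      simpa using (hline 0).continuousAt.tendsto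
    exact hto.eventually (hf.eventually (by simp))
  have hfirst : deriv (fun t : ℝ => f (x + t • e)) =ᶠ[𝓝 0]
      fun t => fderiv ℝ f (x + t • e) e := by
    filter_upwards [hnear] with t ht
    exact ((ht.differentiableAt two_ne_zero).hasFDerivAt.comp_hasDerivAt t (hline t)).deriv
  have hd : DifferentiableAt ℝ (fderiv ℝ f) x :=
    (hf.fderiv_right (m := 1) (by norm_num)).differentiableAt one_ne_zero
  have hsecond : HasDerivAt (fun t : ℝ => fderiv ℝ f (x + t • e) e)
      (fderiv ℝ (fderiv ℝ f) x e e) 0 := by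
    simpa using (hd.hasFDerivAt.comp_hasDerivAt_of_eq 0 (hline 0) (by simp)).clm_apply
      (hasDerivAt_const (0 : ℝ) e)
  rw [iteratedFDeriv_two_apply, hfirst.deriv_eq, hsecond.deriv]
  simp

theorem IsLocalMax.iteratedFDeriv_two_apply_self_nonpos {f : E → ℝ} {x : E} (h : IsLocalMax f x)
    (hf : ContDiffAt ℝ 2 f x) (e : E) : iteratedFDeriv ℝ 2 f x ![e, e] ≤ 0 := by
  have hline : Continuous fun t : ℝ => x + t • e := by fun_prop
  rw [hf.iteratedFDeriv_two_apply_self]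
  refine IsLocalMax.deriv_deriv_nonpos ?_ ?_
  · exact IsLocalMax.comp_continuous (by simpa using h) hline.continuousAt
  · exact ContinuousAt.comp (by simpa using hf.continuousAt) hline.continuousAt

theorem segment_midpoint_subset_closedBall_diff_ball {x y : E} {ρ : ℝ} (hx : x ∈ sphere y ρ) :
    segment ℝ x (midpoint ℝ x y) ⊆ closedBall y ρ \ ball y (ρ / 2) := by
  rw [mem_sphere, dist_eq_norm] at hx
  have hρ : 0 ≤ ρ := hx ▸ norm_nonneg _
  rw [segment_eq_image']
  rintro _ ⟨θ, ⟨hθ0, hθ1⟩, rfl⟩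
  have hdist : dist (x + θ • (midpoint ℝ x y - x)) y = (1 - θ / 2) * ρ := by
    rw [midpoint_sub_left, invOf_eq_inv, dist_eq_norm,
      show x + θ • (2⁻¹ : ℝ) • (y - x) - y = (1 - θ / 2) • (x - y) by module, norm_smul, hx,
      Real.norm_of_nonneg (by linarith)]
  simp only [Set.mem_sdiff, mem_closedBall, mem_ball, hdist, not_lt]
  constructor <;> nlinarith

end NormedSpace

section InnerProductSpace

variable {E : Type*} [NormedAddCommGroup E] [InnerProductSpace ℝ E]

theorem hasFDerivAt_exp_neg_mul_norm_sub_sq (α : ℝ) (y x : E) :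
    HasFDerivAt (fun z => exp (-α * ‖z - y‖ ^ 2))
      ((-2 * α * exp (-α * ‖x - y‖ ^ 2)) • innerSL ℝ (x - y)) x := by
  have hsq : HasFDerivAt (fun z => ‖z - y‖ ^ 2) (2 • innerSL ℝ (x - y)) x := by
    simpa using ((hasFDerivAt_id x).sub_const y).norm_sq
  convert (hsq.const_mul (-α)).exp using 1
  ext h
  simp only [smul_apply, coe_innerSL_apply, smul_eq_mul, nsmul_eq_mul, Nat.cast_ofNat]
  ring

variable [FiniteDimensional ℝ E]

theorem IsLocalMax.laplacian_nonpos {f : E → ℝ} {x : E} (h : IsLocalMax f x)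
    (hf : ContDiffAt ℝ 2 f x) : Δ f x ≤ 0 := by
  rw [laplacian_eq_iteratedFDeriv_stdOrthonormalBasis]
  exact Finset.sum_nonpos fun i _ => h.iteratedFDeriv_two_apply_self_nonpos hf _

theorem IsCompact.forall_nonpos_of_laplacian_pos {K U : Set E} {v : E → ℝ} (hK : IsCompact K)
    (hU : IsOpen U) (hUK : U ⊆ K) (hv : ContinuousOn v K) (hv2 : ContDiffOn ℝ 2 v U)
    (hbdry : ∀ z ∈ K \ U, v z ≤ 0) (hlap : ∀ z ∈ U, 0 < v z → 0 < Δ v z) :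
    ∀ z ∈ K, v z ≤ 0 := by
  by_contra! ⟨z₁, hz₁K, hz₁⟩
  obtain ⟨z₀, hz₀K, hmax⟩ := hK.exists_isMaxOn ⟨z₁, hz₁K⟩ hv
  have hpos : 0 < v z₀ := hz₁.trans_le (hmax hz₁K)
  have hz₀U : z₀ ∈ U := by_contra fun h => (hbdry z₀ ⟨hz₀K, h⟩).not_gt hpos
  have hloc : IsLocalMax v z₀ := hmax.isLocalMax (mem_of_superset (hU.mem_nhds hz₀U) hUK)
  exact (hloc.laplacian_nonpos (hv2.contDiffAt (hU.mem_nhds hz₀U))).not_gt (hlap z₀ hz₀U hpos)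

theorem laplacian_exp_neg_mul_norm_sub_sq (α : ℝ) (y x : E) :
    Δ (fun z => exp (-α * ‖z - y‖ ^ 2)) x =
      exp (-α * ‖x - y‖ ^ 2) * (4 * α ^ 2 * ‖x - y‖ ^ 2 - 2 * α * Module.finrank ℝ E) := by
  set g : E → ℝ := fun z => exp (-α * ‖z - y‖ ^ 2)
  have hg : fderiv ℝ g = fun z => (-2 * α * g z) • innerSL ℝ (z - y) :=
    funext fun z => (hasFDerivAt_exp_neg_mul_norm_sub_sq α y z).fderiv
  have hlin : HasFDerivAt (fun z : E => innerSL ℝ (z - y)) (innerSL ℝ) x := by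
    simpa [Function.comp_def] using
      (innerSL ℝ).hasFDerivAt.comp x ((hasFDerivAt_id x).sub_const y)
  have hg2 : HasFDerivAt (fun z => (-2 * α * g z) • innerSL ℝ (z - y)) _ x :=
    ((hasFDerivAt_exp_neg_mul_norm_sub_sq α y x).const_mul (-2 * α)).smul hlin
  set b := stdOrthonormalBasis ℝ E
  have hterm (i : _) : iteratedFDeriv ℝ 2 g x ![b i, b i] =
      4 * α ^ 2 * g x * ⟪x - y, b i⟫_ℝ ^ 2 - 2 * α * g x := by
    have hbi : ⟪b i, b i⟫_ℝ = 1 := real_inner_self_eq_norm_sq (b i) ▸ by simp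
    rw [iteratedFDeriv_two_apply, hg, hg2.fderiv]
    simp only [g, Fin.isValue, Matrix.cons_val_zero, Matrix.cons_val_one, Matrix.cons_val_fin_one,
      add_apply, smul_apply, ContinuousLinearMap.smulRight_apply, coe_innerSL_apply, smul_eq_mul]
    -- `innerSL ℝ` enters through `hlin` as an `ℝ`-linear map, which `rw` does not unfold.
    erw [innerSL_apply_apply, hbi]
    ring
  rw [laplacian_eq_iteratedFDeriv_orthonormalBasis g b]
  simp only [hterm, Finset.sum_sub_distrib, ← Finset.mul_sum, Finset.sum_const, Finset.card_univ]
  rw [b.sum_sq_inner_left, Fintype.card_fin, nsmul_eq_mul]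
  ring

end InnerProductSpace

noncomputable def hopfBarrier {E : Type*} [NormedAddCommGroup E] (α ρ : ℝ) (y z : E) : ℝ :=
  exp (-α * ‖z - y‖ ^ 2) - exp (-α * ρ ^ 2)

section hopfBarrier

variable {E : Type*} [NormedAddCommGroup E] {α ρ : ℝ} {y z : E}

theorem hopfBarrier_eq_zero_of_mem_sphere (hz : z ∈ sphere y ρ) : hopfBarrier α ρ y z = 0 := by
  rw [mem_sphere, dist_eq_norm] at hz
  simp [hopfBarrier, hz]

theorem hopfBarrier_le_one (hα : 0 ≤ α) : hopfBarrier α ρ y z ≤ 1 := by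
  have : exp (-α * ‖z - y‖ ^ 2) ≤ 1 := exp_le_one_iff.2 (by nlinarith [sq_nonneg ‖z - y‖])
  unfold hopfBarrier
  linarith [exp_pos (-α * ρ ^ 2)]

theorem hopfBarrier_nonneg (hα : 0 ≤ α) (hz : z ∈ closedBall y ρ) : 0 ≤ hopfBarrier α ρ y z := by
  rw [mem_closedBall, dist_eq_norm] at hz
  have : ‖z - y‖ ^ 2 ≤ ρ ^ 2 := pow_le_pow_left₀ (norm_nonneg _) hz 2
  exact sub_nonneg.2 (exp_le_exp.2 (by nlinarith))

variable [InnerProductSpace ℝ E]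

theorem contDiff_hopfBarrier {k : WithTop ℕ∞} : ContDiff ℝ k (hopfBarrier α ρ y) :=
  (contDiff_exp.comp (contDiff_const.mul ((contDiff_id.sub contDiff_const).norm_sq ℝ))).sub
    contDiff_const

theorem hasFDerivAt_hopfBarrier :
    HasFDerivAt (hopfBarrier α ρ y) ((-2 * α * exp (-α * ‖z - y‖ ^ 2)) • innerSL ℝ (z - y)) z :=
  (hasFDerivAt_exp_neg_mul_norm_sub_sq α y z).sub_const _

variable [FiniteDimensional ℝ E]

theorem laplacian_hopfBarrier :
    Δ (hopfBarrier α ρ y) z =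
      exp (-α * ‖z - y‖ ^ 2) * (4 * α ^ 2 * ‖z - y‖ ^ 2 - 2 * α * Module.finrank ℝ E) := by
  have hexp : ContDiffAt ℝ 2 (fun z : E => exp (-α * ‖z - y‖ ^ 2)) z :=
    (contDiff_exp.comp (contDiff_const.mul ((contDiff_id.sub contDiff_const).norm_sq ℝ))).contDiffAt
  change Δ ((fun z : E => exp (-α * ‖z - y‖ ^ 2)) - fun _ : E => exp (-α * ρ ^ 2)) z = _
  rw [← laplacian_exp_neg_mul_norm_sub_sq, hexp.laplacian_sub contDiffAt_const, laplacian_const,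
    Pi.zero_apply, sub_zero]

theorem exists_mul_hopfBarrier_lt_laplacian (y : E) (hρ : 0 < ρ) {M : ℝ} (hM : 0 ≤ M) :
    ∃ α > 0, ∀ z : E, ρ / 2 ≤ ‖z - y‖ → M * hopfBarrier α ρ y z < Δ (hopfBarrier α ρ y) z := by
  set d : ℝ := (Module.finrank ℝ E : ℝ)
  set α := max 1 ((2 * d + M + 1) / ρ ^ 2)
  have hα1 : 1 ≤ α := le_max_left _ _
  have hαρ : 2 * d + M + 1 ≤ α * ρ ^ 2 := (div_le_iff₀ (by positivity)).1 (le_max_right _ _)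
  refine ⟨α, by linarith, fun z hz => ?_⟩
  have hd : 0 ≤ d := Nat.cast_nonneg _
  have hquad : 2 * α * d + M < 4 * α ^ 2 * ‖z - y‖ ^ 2 := by
    have : ρ ^ 2 ≤ 4 * ‖z - y‖ ^ 2 := by nlinarith
    nlinarith [mul_le_mul_of_nonneg_left this (sq_nonneg α)]
  have hw : hopfBarrier α ρ y z ≤ exp (-α * ‖z - y‖ ^ 2) := sub_le_self _ (exp_pos _).le
  rw [laplacian_hopfBarrier]
  nlinarith [exp_pos (-α * ‖z - y‖ ^ 2), mul_le_mul_of_nonneg_left hw hM]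

end hopfBarrier

section Hopf

variable {E : Type*} [NormedAddCommGroup E] [InnerProductSpace ℝ E] [FiniteDimensional ℝ E]
  {u c : E → ℝ} {y : E} {ρ : ℝ}

theorem add_smul_hopfBarrier_nonpos {α ε M : ℝ} (hu : ContinuousOn u (closedBall y ρ))
    (hu2 : ContDiffOn ℝ 2 u (ball y ρ)) (hineq : ∀ z ∈ ball y ρ, 0 ≤ Δ u z + c z * u z)
    (hu_nonpos : ∀ z ∈ closedBall y ρ, u z ≤ 0) (hcM : ∀ z ∈ ball y ρ, -M ≤ c z) (hM : 0 ≤ M)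
    (hα : 0 ≤ α)
    (hbarrier : ∀ z : E, ρ / 2 ≤ ‖z - y‖ → M * hopfBarrier α ρ y z < Δ (hopfBarrier α ρ y) z)
    (hε : 0 < ε) (hinner : ∀ z ∈ sphere y (ρ / 2), u z ≤ -ε) :
    ∀ z ∈ closedBall y ρ \ ball y (ρ / 2), (u + ε • hopfBarrier α ρ y) z ≤ 0 := by
  set w := hopfBarrier α ρ y
  have hw : ContDiff ℝ 2 w := contDiff_hopfBarrier
  refine ((isCompact_closedBall y ρ).diff isOpen_ball).forall_nonpos_of_laplacian_pos
    (isOpen_ball.sdiff isClosed_closedBall)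
    (sdiff_subset_sdiff ball_subset_closedBall ball_subset_closedBall)
    ((hu.mono sdiff_subset).add (hw.continuous.continuousOn.const_smul ε))
    ((hu2.mono sdiff_subset).add (hw.contDiffOn.const_smul ε)) ?_ ?_
  · rintro z ⟨⟨hzρ, hzρ2⟩, hzU⟩
    by_cases hzball : z ∈ ball y ρ
    · have hz : z ∈ sphere y (ρ / 2) :=
        le_antisymm (not_not.1 fun h => hzU ⟨hzball, h⟩) (not_lt.1 hzρ2)
      have := hopfBarrier_le_one (ρ := ρ) (y := y) (z := z) hα
      simp only [Pi.add_apply, Pi.smul_apply, smul_eq_mul]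
      nlinarith [hinner z hz]
    · have hz : z ∈ sphere y ρ := le_antisymm hzρ (not_lt.1 hzball)
      simpa [w, hopfBarrier_eq_zero_of_mem_sphere hz] using hu_nonpos z hzρ
  · rintro z ⟨hzball, hzρ2⟩ hpos
    have hfar : ρ / 2 ≤ ‖z - y‖ := by
      rw [← dist_eq_norm]; exact (not_le.1 hzρ2).le
    have hwz : 0 ≤ w z := hopfBarrier_nonneg hα (ball_subset_closedBall hzball)
    have huz : u z ≤ 0 := hu_nonpos z (ball_subset_closedBall hzball)
    have hcu : c z * u z ≤ M * (ε * w z) := by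
      simp only [Pi.add_apply, Pi.smul_apply, smul_eq_mul] at hpos
      rcases le_total 0 (c z) with hc | hc
      · nlinarith [mul_nonneg hε.le hwz]
      · nlinarith [hcM z hzball]
    have hεw : ContDiffAt ℝ 2 (ε • w) z := hw.contDiffAt.const_smul ε
    rw [(hu2.contDiffAt (isOpen_ball.mem_nhds hzball)).laplacian_add hεw,
      laplacian_smul ε hw.contDiffAt, smul_eq_mul]
    nlinarith [hineq z hzball, hbarrier z hfar]

theorem hopf_lemma {x₀ : E} {f' : E →L[ℝ] ℝ} (hρ : 0 < ρ) (hx₀ : x₀ ∈ sphere y ρ)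
    (hu : ContinuousOn u (closedBall y ρ)) (hu2 : ContDiffOn ℝ 2 u (ball y ρ))
    (hc : BddBelow (c '' ball y ρ)) (hineq : ∀ z ∈ ball y ρ, 0 ≤ Δ u z + c z * u z)
    (hneg : ∀ z ∈ ball y ρ, u z < 0) (hux₀ : u x₀ = 0)
    (hf' : HasFDerivWithinAt u f' (closedBall y ρ) x₀) : 0 < f' (x₀ - y) := by
  obtain ⟨m, hm⟩ := hc
  have hcM : ∀ z ∈ ball y ρ, -max (-m) 0 ≤ c z := fun z hz =>
    (neg_le.1 (le_max_left _ _)).trans (hm (mem_image_of_mem c hz))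
  obtain ⟨α, hα, hbarrier⟩ := exists_mul_hopfBarrier_lt_laplacian y hρ (le_max_right (-m) 0)
  obtain ⟨ε, hε, hinner⟩ := (isCompact_sphere y (ρ / 2)).exists_forall_le'
    (hu.mono (sphere_subset_closedBall.trans (closedBall_subset_closedBall (by linarith)))).neg
    (a := 0) fun z hz => neg_pos.2 (hneg z (sphere_subset_ball (by linarith) hz))
  have hu_nonpos : ∀ z ∈ closedBall y ρ, u z ≤ 0 := by
    rw [← closure_ball y hρ.ne'] at hu ⊢
    exact le_on_closure (fun z hz => (hneg z hz).le) hu continuousOn_const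
  set A := closedBall y ρ \ ball y (ρ / 2)
  set v := u + ε • hopfBarrier α ρ y
  have hvA : ∀ z ∈ A, v z ≤ 0 := add_smul_hopfBarrier_nonpos hu hu2 hineq hu_nonpos hcM
    (le_max_right _ _) hα.le hbarrier hε fun z hz => le_neg.1 (hinner z hz)
  have hmax : IsMaxOn v A x₀ := fun z hz => by
    simpa [v, hux₀, hopfBarrier_eq_zero_of_mem_sphere hx₀] using hvA z hz
  have hvderiv : HasFDerivWithinAt v
      (f' + ε • (-2 * α * exp (-α * ‖x₀ - y‖ ^ 2)) • innerSL ℝ (x₀ - y)) A x₀ :=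
    (hf'.mono sdiff_subset).add (hasFDerivAt_hopfBarrier.hasFDerivWithinAt.const_smul ε)
  have hinward := hmax.localize.hasFDerivWithinAt_nonpos hvderiv
    (sub_mem_posTangentConeAt_of_segment_subset (segment_midpoint_subset_closedBall_diff_ball hx₀))
  have hdir : midpoint ℝ x₀ y - x₀ = (-2⁻¹ : ℝ) • (x₀ - y) := by
    rw [midpoint_sub_left, invOf_eq_inv]
    module
  rw [mem_sphere, dist_eq_norm] at hx₀
  simp only [hdir, map_smul, add_apply, FunLike.coe_smul, Pi.smul_apply, innerSL_apply_apply,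
    real_inner_self_eq_norm_sq, hx₀, smul_eq_mul] at hinward
  have : 0 < ε * (α * exp (-α * ρ ^ 2) * ρ ^ 2) := by positivity
  linarith

end Hopf

theorem stmt_2_general (n : ℕ)
    (Ω : Set (EuclideanSpace ℝ (Fin n)))
    (c : EuclideanSpace ℝ (Fin n) → ℝ)
    (hcbdd : ∃ M : ℝ, ∀ x ∈ Ω, |c x| ≤ M)
    (u : EuclideanSpace ℝ (Fin n) → ℝ)
    (hu2 : ContDiffOn ℝ 2 u Ω) (hu1 : ContDiffOn ℝ 1 u (closure Ω))
    (hineq : ∀ x ∈ Ω, 0 ≤ lapl u x + c x * u x)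
    (hneg : ∀ x ∈ Ω, u x < 0)
    (x₀ : EuclideanSpace ℝ (Fin n)) (hux₀ : u x₀ = 0)
    (y : EuclideanSpace ℝ (Fin n)) (ρ : ℝ) (hρ : 0 < ρ)
    (hball : ball y ρ ⊆ Ω) (htouch : x₀ ∈ sphere y ρ) :
    0 < fderivWithin ℝ u (closure Ω) x₀ (ρ⁻¹ • (x₀ - y)) := by
  have hcl : closedBall y ρ ⊆ closure Ω := closure_ball y hρ.ne' ▸ closure_mono hball
  have hx₀ : x₀ ∈ closure Ω := hcl (sphere_subset_closedBall htouch)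
  obtain ⟨M, hM⟩ := hcbdd
  have hc : BddBelow (c '' ball y ρ) :=
    ⟨-M, forall_mem_image.2 fun z hz => neg_le_of_abs_le (hM z (hball hz))⟩
  have hderiv := (hu1.differentiableOn one_ne_zero x₀ hx₀).hasFDerivWithinAt.mono hcl
  have hpos := hopf_lemma hρ htouch (hu1.continuousOn.mono hcl) (hu2.mono hball) hc
    (fun z hz => lapl_eq_laplacian u ▸ hineq z (hball hz)) (fun z hz => hneg z (hball hz)) hux₀
    hderiv
  rw [map_smul, smul_eq_mul]
  exact mul_pos (inv_pos.2 hρ) hpos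

/-- Hopf's Lemma, with a possibly sign-changing zeroth order coefficient. -/
theorem stmt_2 (n : ℕ) (hn : 2 ≤ n)
    (Ω : Set (EuclideanSpace ℝ (Fin n))) (hΩ : IsOpen Ω)
    (c : EuclideanSpace ℝ (Fin n) → ℝ) (hc : ContinuousOn c Ω)
    (hcbdd : ∃ M : ℝ, ∀ x ∈ Ω, |c x| ≤ M)
    (u : EuclideanSpace ℝ (Fin n) → ℝ)
    (hu2 : ContDiffOn ℝ 2 u Ω) (hu1 : ContDiffOn ℝ 1 u (closure Ω))
    (hineq : ∀ x ∈ Ω, 0 ≤ lapl u x + c x * u x)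
    (hneg : ∀ x ∈ Ω, u x < 0)
    (x₀ : EuclideanSpace ℝ (Fin n)) (hx₀ : x₀ ∈ frontier Ω) (hux₀ : u x₀ = 0)
    (y : EuclideanSpace ℝ (Fin n)) (ρ : ℝ) (hρ : 0 < ρ)
    (hy : y ∈ Ω) (hball : ball y ρ ⊆ Ω) (htouch : x₀ ∈ sphere y ρ) :
    0 < fderivWithin ℝ u (closure Ω) x₀ (ρ⁻¹ • (x₀ - y)) :=
  stmt_2_general n Ω c hcbdd u hu2 hu1 hineq hneg x₀ hux₀ y ρ hρ hball htouch
end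

section
/- (Non-degeneracy.) Let n ≥ 2, r > 1, and let f : ℝ → ℝ be C¹ with f(s) ≤ 0 for all s. Let v ∈ C²(closure(B_r \ closure(B_1))) be a radially symmetric function with Δv = f(v) in B_r \ closure(B_1), v = 1 on |x| = 1, v = −1 on |x| = r, whose free boundary F = ∂{v > 0} is the sphere {|x| = ρ} for some ρ ∈ (1, r), with {v > 0} = {x : 1 ≤ |x| < ρ} (intersected with the closed annulus). Then there exists a constant c > 0, depending only on n and ρ, such that v(x) ≥ c · dist(x, F) for every x in {v > 0}. -/
/-!
Along a ray the radial function `v` has a profile `φ`; each of the `n - 1` directions orthogonal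
to the ray contributes `φ' / t` to `Δv`, so `φ'' + (n - 1) φ' / t = f(φ) ≤ 0`, i.e.
`t ^ (n - 1) φ'` is nonincreasing. The comparison function `ℓ t = t ^ (1 - n) - ρ ^ (1 - n)`
satisfies `ℓ 1 ≤ φ 1`, `ℓ ρ = 0 ≤ φ ρ`, and `t ^ (n - 1) ℓ' = -(n - 1) / t` is nondecreasing, so
`φ - ℓ` cannot dip below zero on `[1, ρ]` (by the mean value theorem it would have to decrease and
then increase). Hence `v x ≥ ℓ |x| ≥ ρ ^ (-n) (ρ - |x|) ≥ ρ ^ (-n) dist(x, F)`.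
-/

open Metric Set

/-- The free boundary of `v`: the boundary, within the domain `Ω`, of the positivity set. -/
def freeBoundary {n : ℕ} (Ω : Set (EuclideanSpace ℝ (Fin n)))
    (v : EuclideanSpace ℝ (Fin n) → ℝ) : Set (EuclideanSpace ℝ (Fin n)) :=
  Ω ∩ frontier {x | x ∈ Ω ∧ 0 < v x}

open Filter Topology RealInnerProductSpace

lemma iteratedFDeriv_two_apply_self {E : Type*} [NormedAddCommGroup E] [NormedSpace ℝ E]
    {v : E → ℝ} {p : E} (hv : ContDiffAt ℝ 2 v p) (w : E) :
    iteratedFDeriv ℝ 2 v p ![w, w] = deriv (deriv fun s : ℝ => v (p + s • w)) 0 := by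
  have hline : ∀ s : ℝ, HasDerivAt (fun s : ℝ => p + s • w) w s := fun s => by
    simpa using ((hasDerivAt_id s).smul_const w).const_add p
  have hline_tendsto : Tendsto (fun s : ℝ => p + s • w) (𝓝 0) (𝓝 p) := by
    simpa using (hline 0).continuousAt.tendsto
  have hv_diff : ∀ᶠ s in 𝓝 (0 : ℝ), DifferentiableAt ℝ v (p + s • w) :=
    hline_tendsto.eventually
      ((hv.eventually (by simp)).mono fun y hy => hy.differentiableAt (by norm_num))
  have hderiv : deriv (fun s : ℝ => v (p + s • w)) =ᶠ[𝓝 0]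
      fun s => fderiv ℝ v (p + s • w) w := by
    filter_upwards [hv_diff] with s hs
    exact (hs.hasFDerivAt.comp_hasDerivAt s (hline s)).deriv
  have hd : DifferentiableAt ℝ (fderiv ℝ v) p :=
    (hv.fderiv_right (m := 1) (by norm_num)).differentiableAt one_ne_zero
  have hcomp : HasDerivAt (fun s : ℝ => fderiv ℝ v (p + s • w) w)
      (fderiv ℝ (fderiv ℝ v) p w w) 0 :=
    ((ContinuousLinearMap.apply ℝ ℝ w).hasFDerivAt.comp p hd.hasFDerivAt).comp_hasDerivAt_of_eq
      0 (hline 0) (by simp)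
  rw [hderiv.deriv_eq, hcomp.deriv, iteratedFDeriv_two_apply]
  simp

lemma hasDerivAt_id_mul_of_continuousAt {G : ℝ → ℝ} (hG : ContinuousAt G 0) :
    HasDerivAt (fun s => s * G s) (G 0) 0 := by
  rw [hasDerivAt_iff_tendsto_slope_zero]
  refine (hG.tendsto.mono_left nhdsWithin_le_nhds).congr' ?_
  filter_upwards [self_mem_nhdsWithin] with s hs
  rw [zero_add, zero_mul, sub_zero, smul_eq_mul, inv_mul_cancel_left₀ hs]

lemma deriv_deriv_comp_const_add (φ : ℝ → ℝ) (t : ℝ) :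
    deriv (deriv fun s => φ (t + s)) 0 = deriv (deriv φ) t := by
  rw [show (deriv fun s => φ (t + s)) = fun s => deriv φ (t + s) from
    funext fun s => deriv_comp_const_add .., deriv_comp_const_add, add_zero]

lemma deriv_deriv_comp_sqrt_sq_add_sq {φ : ℝ → ℝ} {t : ℝ} (ht : 0 < t)
    (hφ : ContDiffAt ℝ 2 φ t) :
    deriv (deriv fun s => φ √(t ^ 2 + s ^ 2)) 0 = deriv φ t / t := by
  set q : ℝ → ℝ := fun s => √(t ^ 2 + s ^ 2)
  have hq_pos : ∀ s, 0 < q s := fun s => Real.sqrt_pos.2 (by positivity)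
  have hq0 : q 0 = t := by simp [q, Real.sqrt_sq ht.le]
  have hq : ∀ s, HasDerivAt q (s / q s) s := by
    intro s
    have h := ((hasDerivAt_pow 2 s).const_add (t ^ 2)).sqrt (by positivity)
    convert h using 1
    simp only [q]
    field_simp
    norm_num [mul_comm]
  have hq_cont : Continuous q := by fun_prop
  have hφ_diff : ∀ᶠ s in 𝓝 0, DifferentiableAt ℝ φ (q s) := by
    have := (hφ.eventually (by simp)).mono fun u hu => hu.differentiableAt (by norm_num)
    exact hq_cont.continuousAt.tendsto.eventually (hq0 ▸ this)
  have hderiv : deriv (fun s => φ (q s)) =ᶠ[𝓝 0] fun s => s * (deriv φ (q s) / q s) := by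
    filter_upwards [hφ_diff] with s hs
    rw [show (fun s => φ (q s)) = φ ∘ q from rfl, (hs.hasDerivAt.comp s (hq s)).deriv]
    ring
  have hG : ContinuousAt (fun s => deriv φ (q s) / q s) 0 := by
    refine ContinuousAt.div ?_ hq_cont.continuousAt (hq_pos 0).ne'
    refine ContinuousAt.comp (g := deriv φ) ?_ hq_cont.continuousAt
    rw [hq0]
    exact (hφ.derivWithin (m := 1) (by norm_num)).continuousAt
  rw [hderiv.deriv_eq, (hasDerivAt_id_mul_of_continuousAt hG).deriv, hq0]

section Radial

variable {E : Type*} [NormedAddCommGroup E] [InnerProductSpace ℝ E] {v : E → ℝ} {φ : ℝ → ℝ}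
  {e : E} {t : ℝ}

lemma eventuallyEq_comp_smul_of_radial (ht : 0 < t) (he : ‖e‖ = 1)
    (hrad : ∀ᶠ x in 𝓝 (t • e), v x = φ ‖x‖) : (fun s : ℝ => v (s • e)) =ᶠ[𝓝 t] φ := by
  have hcont : Tendsto (fun s : ℝ => s • e) (𝓝 t) (𝓝 (t • e)) :=
    (continuous_id.smul continuous_const).tendsto t
  filter_upwards [hcont.eventually hrad, lt_mem_nhds ht] with s hs hs0
  rw [hs, norm_smul, he, mul_one, Real.norm_of_nonneg hs0.le]

lemma contDiffAt_of_radial {k : WithTop ℕ∞} (ht : 0 < t) (he : ‖e‖ = 1)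
    (hv : ContDiffAt ℝ k v (t • e)) (hrad : ∀ᶠ x in 𝓝 (t • e), v x = φ ‖x‖) :
    ContDiffAt ℝ k φ t :=
  (hv.comp t (contDiffAt_id.smul contDiffAt_const)).congr_of_eventuallyEq
    (eventuallyEq_comp_smul_of_radial ht he hrad).symm

lemma iteratedFDeriv_two_apply_radial (ht : 0 < t) (he : ‖e‖ = 1)
    (hv : ContDiffAt ℝ 2 v (t • e)) (hrad : ∀ᶠ x in 𝓝 (t • e), v x = φ ‖x‖) :
    iteratedFDeriv ℝ 2 v (t • e) ![e, e] = deriv (deriv φ) t := by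
  have hshift : Tendsto (fun s : ℝ => t + s) (𝓝 0) (𝓝 t) :=
    (continuous_const_add t).tendsto' 0 _ (add_zero t)
  have hline : (fun s : ℝ => v (t • e + s • e)) =ᶠ[𝓝 0] fun s => φ (t + s) := by
    filter_upwards [hshift.eventually (eventuallyEq_comp_smul_of_radial ht he hrad)] with s hs
    rw [← add_smul, hs]
  rw [iteratedFDeriv_two_apply_self hv, hline.deriv.deriv_eq, deriv_deriv_comp_const_add]

lemma norm_smul_add_smul_of_inner_eq_zero {w : E} (he : ‖e‖ = 1) (hw : ‖w‖ = 1)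
    (hew : ⟪e, w⟫ = 0) (a b : ℝ) : ‖a • e + b • w‖ = √(a ^ 2 + b ^ 2) := by
  rw [← Real.sqrt_sq (norm_nonneg _), norm_add_sq_real, real_inner_smul_left,
    real_inner_smul_right, hew, norm_smul, norm_smul, he, hw]
  simp

lemma iteratedFDeriv_two_apply_tangent {w : E} (ht : 0 < t) (he : ‖e‖ = 1) (hw : ‖w‖ = 1)
    (hew : ⟪e, w⟫ = 0) (hv : ContDiffAt ℝ 2 v (t • e))
    (hrad : ∀ᶠ x in 𝓝 (t • e), v x = φ ‖x‖) :
    iteratedFDeriv ℝ 2 v (t • e) ![w, w] = deriv φ t / t := by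
  rw [iteratedFDeriv_two_apply_self hv,
    ← deriv_deriv_comp_sqrt_sq_add_sq ht (contDiffAt_of_radial ht he hv hrad)]
  have hcont : Tendsto (fun s : ℝ => t • e + s • w) (𝓝 0) (𝓝 (t • e)) :=
    (by fun_prop : Continuous fun s : ℝ => t • e + s • w).tendsto' 0 _ (by simp)
  have hline : (fun s : ℝ => v (t • e + s • w)) =ᶠ[𝓝 0] fun s => φ √(t ^ 2 + s ^ 2) := by
    filter_upwards [hcont.eventually hrad] with s hs
    rw [hs, norm_smul_add_smul_of_inner_eq_zero he hw hew]
  exact hline.deriv.deriv_eq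

end Radial

theorem lapl_of_radial {n : ℕ} {v : EuclideanSpace ℝ (Fin n) → ℝ} {φ : ℝ → ℝ} {t : ℝ}
    (ht : 0 < t) (i₀ : Fin n) (hv : ContDiffAt ℝ 2 v (t • EuclideanSpace.single i₀ 1))
    (hrad : ∀ᶠ x in 𝓝 (t • EuclideanSpace.single i₀ 1), v x = φ ‖x‖) :
    lapl v (t • EuclideanSpace.single i₀ 1)
      = deriv (deriv φ) t + (n - 1 : ℕ) * (deriv φ t / t) := by
  have he : ‖EuclideanSpace.single i₀ (1 : ℝ)‖ = 1 := by simp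
  have htangent : ∀ i ∈ ({i₀}ᶜ : Finset (Fin n)),
      iteratedFDeriv ℝ 2 v (t • EuclideanSpace.single i₀ 1)
        ![EuclideanSpace.single i 1, EuclideanSpace.single i 1] = deriv φ t / t := by
    intro i hi
    refine iteratedFDeriv_two_apply_tangent ht he (by simp) ?_ hv hrad
    have hne : i₀ ≠ i := fun h => by simp [h] at hi
    simp [EuclideanSpace.inner_single_left, hne]
  rw [lapl, Fintype.sum_eq_add_sum_compl i₀, iteratedFDeriv_two_apply_radial ht he hv hrad,
    Finset.sum_congr rfl htangent, Finset.sum_const, Finset.card_compl, Finset.card_singleton,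
    Fintype.card_fin, nsmul_eq_mul]

lemma nonneg_of_antitoneOn_mul_deriv {g g' w : ℝ → ℝ} {a b : ℝ}
    (hg : ContinuousOn g (Icc a b)) (hg' : ∀ x ∈ Ioo a b, HasDerivAt g (g' x) x)
    (hw : ∀ x ∈ Ioo a b, 0 < w x) (hanti : AntitoneOn (fun x => w x * g' x) (Ioo a b))
    (ha : 0 ≤ g a) (hb : 0 ≤ g b) : ∀ x ∈ Icc a b, 0 ≤ g x := by
  intro x hx
  by_contra! hneg
  have hxa : a < x := lt_of_le_of_ne hx.1 (by rintro rfl; linarith)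
  have hxb : x < b := lt_of_le_of_ne hx.2 (by rintro rfl; linarith)
  obtain ⟨α, hα, hα'⟩ := exists_hasDerivAt_eq_slope g g' hxa
    (hg.mono (Icc_subset_Icc_right hx.2)) fun y hy => hg' y ⟨hy.1, hy.2.trans hxb⟩
  obtain ⟨β, hβ, hβ'⟩ := exists_hasDerivAt_eq_slope g g' hxb
    (hg.mono (Icc_subset_Icc_left hx.1)) fun y hy => hg' y ⟨hxa.trans hy.1, hy.2⟩
  have hαI : α ∈ Ioo a b := ⟨hα.1, hα.2.trans hxb⟩
  have hβI : β ∈ Ioo a b := ⟨hxa.trans hβ.1, hβ.2⟩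
  have hα_neg : w α * g' α < 0 :=
    mul_neg_of_pos_of_neg (hw α hαI) (hα' ▸ div_neg_of_neg_of_pos (by linarith) (by linarith))
  have hβ_pos : 0 < w β * g' β :=
    mul_pos (hw β hβI) (hβ' ▸ div_pos (by linarith) (by linarith))
  linarith [hanti hαI hβI (hα.2.trans hβ.1).le]

lemma hasDerivAt_pow_of_ne_zero (m : ℕ) {t : ℝ} (ht : t ≠ 0) :
    HasDerivAt (fun s : ℝ => s ^ m) (m * t ^ m / t) t := by
  rw [show (m : ℝ) * t ^ m / t = m * t ^ (m - 1) by
    rcases m with _ | m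
    · simp
    · rw [Nat.add_sub_cancel, pow_succ, mul_div_assoc, mul_div_cancel_right₀ _ ht]]
  exact hasDerivAt_pow m t

lemma antitoneOn_pow_mul_deriv {φ : ℝ → ℝ} {m : ℕ} {a b : ℝ} (ha : 0 < a)
    (hφ : ∀ t ∈ Ioo a b, ContDiffAt ℝ 2 φ t)
    (hsuper : ∀ t ∈ Ioo a b, deriv (deriv φ) t + m * (deriv φ t / t) ≤ 0) :
    AntitoneOn (fun t => t ^ m * deriv φ t) (Ioo a b) := by
  have hderiv : ∀ t ∈ Ioo a b, HasDerivAt (fun t => t ^ m * deriv φ t)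
      (t ^ m * (deriv (deriv φ) t + m * (deriv φ t / t))) t := by
    intro t ht
    have ht0 : t ≠ 0 := (ha.trans ht.1).ne'
    have hφ' := ((hφ t ht).derivWithin (m := 1) (by norm_num)).differentiableAt one_ne_zero
    exact ((hasDerivAt_pow_of_ne_zero m ht0).fun_mul hφ'.hasDerivAt).congr_deriv (by ring)
  refine antitoneOn_of_deriv_nonpos (convex_Ioo a b)
    (fun t ht => (hderiv t ht).continuousAt.continuousWithinAt)
    (fun t ht => (hderiv t (interior_subset ht)).differentiableAt.differentiableWithinAt)
    fun t ht => ?_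
  rw [interior_Ioo] at ht
  rw [(hderiv t ht).deriv]
  exact mul_nonpos_of_nonneg_of_nonpos (pow_nonneg (ha.trans ht.1).le m) (hsuper t ht)

lemma inv_pow_mul_sub_le_inv_pow_sub_inv_pow (m : ℕ) {t ρ : ℝ} (ht : 0 < t) (htρ : t ≤ ρ) :
    (ρ ^ (m + 2))⁻¹ * (ρ - t) ≤ (t ^ (m + 1))⁻¹ - (ρ ^ (m + 1))⁻¹ := by
  have hρ : 0 < ρ := ht.trans_le htρ
  have hnum : ρ ^ m * (ρ - t) ≤ ρ ^ (m + 1) - t ^ (m + 1) := by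
    have : t * t ^ m ≤ t * ρ ^ m := by gcongr
    rw [pow_succ', pow_succ']
    linarith
  have hden : t ^ (m + 1) * ρ ^ (m + 1) ≤ ρ ^ (m + 1) * ρ ^ (m + 1) := by gcongr
  calc (ρ ^ (m + 2))⁻¹ * (ρ - t) = ρ ^ m * (ρ - t) / (ρ ^ (m + 1) * ρ ^ (m + 1)) := by
        field_simp
        ring
    _ ≤ (ρ ^ (m + 1) - t ^ (m + 1)) / (t ^ (m + 1) * ρ ^ (m + 1)) := by
        gcongr
        exact hnum.trans' (by have := sub_nonneg.2 htρ; positivity)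
    _ = (t ^ (m + 1))⁻¹ - (ρ ^ (m + 1))⁻¹ := by
        field_simp

theorem inv_pow_mul_sub_le_of_radial_supersolution {φ : ℝ → ℝ} (m : ℕ) {ρ : ℝ} (hρ : 1 < ρ)
    (hcont : ContinuousOn φ (Icc 1 ρ)) (hφ : ∀ t ∈ Ioo 1 ρ, ContDiffAt ℝ 2 φ t)
    (hsuper : ∀ t ∈ Ioo 1 ρ, deriv (deriv φ) t + ((m + 1 : ℕ) : ℝ) * (deriv φ t / t) ≤ 0)
    (hφ1 : 1 ≤ φ 1) (hφρ : 0 ≤ φ ρ) :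
    ∀ t ∈ Icc 1 ρ, (ρ ^ (m + 2))⁻¹ * (ρ - t) ≤ φ t := by
  set ℓ : ℝ → ℝ := fun t => (t ^ (m + 1))⁻¹ - (ρ ^ (m + 1))⁻¹
  set g' : ℝ → ℝ := fun t => deriv φ t + (m + 1) / t / t ^ (m + 1)
  have hg' : ∀ t ∈ Ioo 1 ρ, HasDerivAt (fun t => φ t - ℓ t) (g' t) t := by
    intro t ht
    have ht0 : t ≠ 0 := (one_pos.trans ht.1).ne'
    have hφ' := ((hφ t ht).differentiableAt (by norm_num)).hasDerivAt
    have hℓ := ((hasDerivAt_pow_of_ne_zero (m + 1) ht0).fun_inv (pow_ne_zero _ ht0)).sub_const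
      (ρ ^ (m + 1))⁻¹
    refine (hφ'.sub hℓ).congr_deriv ?_
    simp only [g']
    field_simp
    push_cast
    ring
  have hweight : ∀ t ≠ 0, t ^ (m + 1) * g' t = t ^ (m + 1) * deriv φ t + (m + 1) / t := by
    intro t ht
    simp only [g']
    field_simp
  have hanti : AntitoneOn (fun t => t ^ (m + 1) * g' t) (Ioo 1 ρ) := by
    intro x hx y hy hxy
    have hx0 : 0 < x := one_pos.trans hx.1
    have hφ_anti := antitoneOn_pow_mul_deriv one_pos hφ hsuper hx hy hxy
    have hinv : (m + 1 : ℝ) / y ≤ (m + 1) / x := by gcongr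
    simp only [hweight x hx0.ne', hweight y (hx0.trans_le hxy).ne'] at hφ_anti ⊢
    linarith
  have hℓ_cont : ContinuousOn ℓ (Icc 1 ρ) :=
    ((continuous_pow (m + 1)).continuousOn.inv₀
      fun t ht => (pow_pos (one_pos.trans_le ht.1) _).ne').sub continuousOn_const
  have hg := nonneg_of_antitoneOn_mul_deriv (g := fun t => φ t - ℓ t) (hcont.sub hℓ_cont) hg'
    (fun t ht => pow_pos (one_pos.trans ht.1) _) hanti
    (by
      simp only [ℓ, one_pow, inv_one]
      linarith [inv_nonneg.2 (pow_nonneg (one_pos.trans hρ).le (m + 1))])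
    (by simpa [ℓ] using hφρ)
  intro t ht
  have hℓ := inv_pow_mul_sub_le_inv_pow_sub_inv_pow m (one_pos.trans_le ht.1) ht.2
  linarith [hg t ht]

section Annulus

variable {E : Type*} [NormedAddCommGroup E]

def annulus (a b : ℝ) : Set E := {y | a < ‖y‖ ∧ ‖y‖ < b}

lemma isOpen_annulus (a b : ℝ) : IsOpen (annulus a b : Set E) :=
  (isOpen_lt continuous_const continuous_norm).inter (isOpen_lt continuous_norm continuous_const)

lemma closure_annulus_subset (a b : ℝ) :
    closure (annulus a b : Set E) ⊆ {y | a ≤ ‖y‖ ∧ ‖y‖ ≤ b} :=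
  closure_minimal (fun _ hy => ⟨hy.1.le, hy.2.le⟩)
    ((isClosed_le continuous_const continuous_norm).inter
      (isClosed_le continuous_norm continuous_const))

variable [NormedSpace ℝ E]

lemma smul_mem_annulus {e : E} (he : ‖e‖ = 1) {a b t : ℝ} (ha : 0 ≤ a) (ht : t ∈ Ioo a b) :
    t • e ∈ annulus a b := by
  show a < ‖t • e‖ ∧ ‖t • e‖ < b
  rwa [norm_smul, he, mul_one, Real.norm_of_nonneg (ha.trans ht.1.le)]

lemma smul_mem_closure_annulus {e : E} (he : ‖e‖ = 1) {a b t : ℝ} (ha : 0 ≤ a) (hab : a < b)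
    (ht : t ∈ Icc a b) : t • e ∈ closure (annulus a b) :=
  map_mem_closure (f := fun s : ℝ => s • e) (continuous_id.smul continuous_const)
    (by rwa [closure_Ioo hab.ne]) fun _ hs => smul_mem_annulus he ha hs

lemma infDist_sphere_zero_le {x : E} (hx : x ≠ 0) {ρ : ℝ} (hρ : 0 ≤ ρ) :
    infDist x (sphere 0 ρ) ≤ |‖x‖ - ρ| := by
  have hx' : ‖x‖ ≠ 0 := norm_ne_zero_iff.2 hx
  have hmem : (ρ / ‖x‖) • x ∈ sphere (0 : E) ρ := by
    rw [mem_sphere_zero_iff_norm, norm_smul, Real.norm_of_nonneg (by positivity),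
      div_mul_cancel₀ _ hx']
  refine (infDist_le_dist_of_mem hmem).trans_eq ?_
  rw [dist_eq_norm, show x - (ρ / ‖x‖) • x = (1 - ρ / ‖x‖) • x by rw [sub_smul, one_smul],
    norm_smul, Real.norm_eq_abs, show ‖x‖ - ρ = (1 - ρ / ‖x‖) * ‖x‖ by field_simp, abs_mul,
    abs_norm]

end Annulus

theorem inv_pow_mul_sub_le_of_radial_superharmonic {n : ℕ} (hn : 2 ≤ n) {ρ r : ℝ} (hρ : 1 < ρ)
    (hρr : ρ ≤ r) {v : EuclideanSpace ℝ (Fin n) → ℝ}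
    (hv : ContDiffOn ℝ 2 v (closure (annulus 1 r)))
    (hsym : ∀ x ∈ closure (annulus 1 r), ∀ y ∈ closure (annulus 1 r), ‖x‖ = ‖y‖ → v x = v y)
    (hsuper : ∀ y ∈ annulus 1 r, lapl v y ≤ 0) (hv1 : ∀ y, ‖y‖ = 1 → 1 ≤ v y)
    (hpos : ∀ y ∈ closure (annulus 1 r), ‖y‖ < ρ → 0 ≤ v y) :
    ∀ y ∈ closure (annulus 1 r), ‖y‖ ≤ ρ → (ρ ^ n)⁻¹ * (ρ - ‖y‖) ≤ v y := by
  obtain ⟨m, rfl⟩ : ∃ m, n = m + 2 := ⟨n - 2, by omega⟩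
  set e₀ : EuclideanSpace ℝ (Fin (m + 2)) := EuclideanSpace.single 0 1
  have he₀ : ‖e₀‖ = 1 := by simp [e₀]
  have hseg : ∀ t ∈ Icc 1 ρ, t • e₀ ∈ closure (annulus 1 r) := fun t ht =>
    smul_mem_closure_annulus he₀ zero_le_one (hρ.trans_le hρr) ⟨ht.1, ht.2.trans hρr⟩
  have hseg_open : ∀ t ∈ Ioo 1 ρ, annulus 1 r ∈ 𝓝 (t • e₀) := fun t ht =>
    (isOpen_annulus 1 r).mem_nhds (smul_mem_annulus he₀ zero_le_one ⟨ht.1, ht.2.trans_le hρr⟩)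
  set φ : ℝ → ℝ := fun t => v (t • e₀)
  have hφ_rad : ∀ y ∈ closure (annulus 1 r), v y = φ ‖y‖ := by
    intro y hy
    have hy' := closure_annulus_subset 1 r hy
    refine hsym y hy _ (smul_mem_closure_annulus he₀ zero_le_one (hρ.trans_le hρr) hy') ?_
    rw [norm_smul, he₀, mul_one, norm_norm]
  have hv_smooth : ∀ t ∈ Ioo 1 ρ, ContDiffAt ℝ 2 v (t • e₀) := fun t ht =>
    hv.contDiffAt (mem_of_superset (hseg_open t ht) subset_closure)
  have hv_rad : ∀ t ∈ Ioo 1 ρ, ∀ᶠ y in 𝓝 (t • e₀), v y = φ ‖y‖ := fun t ht =>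
    eventually_of_mem (hseg_open t ht) fun y hy => hφ_rad y (subset_closure hy)
  have hφ_cont : ContinuousOn φ (Icc 1 ρ) :=
    hv.continuousOn.comp (continuous_id.smul continuous_const).continuousOn hseg
  have hφρ : 0 ≤ φ ρ := by
    refine le_on_closure (fun t ht => ?_) continuousOn_const (by rwa [closure_Ico hρ.ne])
      (by rw [closure_Ico hρ.ne]; exact right_mem_Icc.2 hρ.le)
    refine hpos _ (hseg t (Ico_subset_Icc_self ht)) ?_
    rw [norm_smul, he₀, mul_one, Real.norm_of_nonneg (zero_le_one.trans ht.1)]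
    exact ht.2
  have hφ_super : ∀ t ∈ Ioo 1 ρ, deriv (deriv φ) t + ((m + 1 : ℕ) : ℝ) * (deriv φ t / t) ≤ 0 :=
    fun t ht =>
      (lapl_of_radial (one_pos.trans ht.1) 0 (hv_smooth t ht) (hv_rad t ht)).symm.trans_le
        (hsuper _ (mem_of_mem_nhds (hseg_open t ht)))
  have hφ_smooth : ∀ t ∈ Ioo 1 ρ, ContDiffAt ℝ 2 φ t := fun t ht =>
    contDiffAt_of_radial (one_pos.trans ht.1) he₀ (hv_smooth t ht) (hv_rad t ht)
  intro y hy hyρ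
  rw [hφ_rad y hy]
  exact inv_pow_mul_sub_le_of_radial_supersolution m hρ hφ_cont hφ_smooth hφ_super
    (hv1 _ (by rw [one_smul, he₀])) hφρ _ ⟨(closure_annulus_subset 1 r hy).1, hyρ⟩

/-- Non-degeneracy: `v ≥ c · dist(·, F)` on the positivity set, with `c = c(n, ρ)`. -/
theorem stmt_16 (n : ℕ) (hn : 2 ≤ n) (ρ : ℝ) (hρ : 1 < ρ) :
    ∃ c > (0 : ℝ), ∀ (r : ℝ), ρ < r →
      ∀ (f : ℝ → ℝ), ContDiff ℝ 1 f → (∀ s, f s ≤ 0) →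
      ∀ (Ω : Set (EuclideanSpace ℝ (Fin n))),
        Ω = ball (0 : EuclideanSpace ℝ (Fin n)) r \ closure (ball 0 1) →
      ∀ (v : EuclideanSpace ℝ (Fin n) → ℝ),
        ContDiffOn ℝ 2 v (closure Ω) →
        -- radial symmetry
        (∀ x ∈ closure Ω, ∀ y ∈ closure Ω, ‖x‖ = ‖y‖ → v x = v y) →
        (∀ x ∈ Ω, lapl v x = f (v x)) →
        (∀ x : EuclideanSpace ℝ (Fin n), ‖x‖ = 1 → v x = 1) →
        (∀ x : EuclideanSpace ℝ (Fin n), ‖x‖ = r → v x = -1) →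
        -- the free boundary is the sphere of radius ρ
        freeBoundary Ω v = sphere (0 : EuclideanSpace ℝ (Fin n)) ρ →
        -- the positivity set is the inner annulus `1 ≤ |x| < ρ`
        (∀ x ∈ closure Ω, (0 < v x ↔ ‖x‖ < ρ)) →
        ∀ x ∈ closure Ω, 0 < v x →
          c * infDist x (freeBoundary Ω v) ≤ v x := by
  refine ⟨(ρ ^ n)⁻¹, by positivity, fun r hρr f _ hf Ω hΩ v hv hsym hlapl hv1 _ hFB hpos
    x hx hvx => ?_⟩
  obtain rfl : Ω = annulus 1 r := by
    ext y
    simp [hΩ, annulus, closure_ball _ one_ne_zero, and_comm]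
  have hxρ : ‖x‖ < ρ := (hpos x hx).1 hvx
  have hx0 : x ≠ 0 := norm_pos_iff.1 (one_pos.trans_le (closure_annulus_subset 1 r hx).1)
  calc (ρ ^ n)⁻¹ * infDist x (freeBoundary (annulus 1 r) v)
      ≤ (ρ ^ n)⁻¹ * (ρ - ‖x‖) := by
        rw [hFB, ← abs_of_pos (sub_pos.2 hxρ), abs_sub_comm]
        gcongr
        exact infDist_sphere_zero_le hx0 (by linarith)
    _ ≤ v x := inv_pow_mul_sub_le_of_radial_superharmonic hn hρ hρr.le hv hsym
        (fun y hy => (hlapl y hy).trans_le (hf _)) (fun y hy => (hv1 y hy).ge)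
        (fun y hy hyρ => ((hpos y hy).2 hyρ).le) x hx hxρ.le
end

section
/- Let n ≥ 2 and 1 < R₁ ≤ R₂, and let u₁ be a continuous function on closure(B_{R₁} \ closure(B_1)) and u₂ a continuous function on closure(B_{R₂} \ closure(B_1)) such that u₁(x) ≤ u₂(x) ≤ u₁(x) + K for all x ∈ B_{R₁} \ closure(B_1), for some constant K > 0. Let F₁ = ∂{u₁ > 0} and F₂ = ∂{u₂ > 0} be their free boundaries, with F₁ ⊆ B_{R₁} \ closure(B_1), and suppose u₂ is non-degenerate: there is c > 0 with u₂(x) ≥ c · dist(x, F₂) for every x with u₂(x) > 0. Then sup_{x ∈ F₁} dist(x, F₂) ≤ K/c. -/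
open Metric Set

/-!
Near a point `x` of the free boundary of `u₁` there are points `y` where `u₁ y > 0`, hence
`u₂ y > 0`, and non-degeneracy gives `c · dist(y, F₂) ≤ u₂ y ≤ u₁ y + K`. Letting `y → x` and
using `u₁ x ≤ 0` (the positivity set is open, so it misses its frontier) gives
`c · dist(x, F₂) ≤ K`.
-/

section FreeBoundary

variable {X : Type*} [TopologicalSpace X] {U : Set X} {u : X → ℝ}

theorem isOpen_setOf_mem_and_pos (hU : IsOpen U) (hu : ContinuousOn u U) :
    IsOpen {x | x ∈ U ∧ 0 < u x} :=
  hu.isOpen_inter_preimage hU isOpen_Ioi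

theorem nonpos_of_mem_frontier_setOf_pos (hU : IsOpen U) (hu : ContinuousOn u U) {x : X}
    (hxU : x ∈ U) (hx : x ∈ frontier {x | x ∈ U ∧ 0 < u x}) : u x ≤ 0 := by
  rw [(isOpen_setOf_mem_and_pos hU hu).frontier_eq] at hx
  exact not_lt.mp fun hpos => hx.2 ⟨hxU, hpos⟩

end FreeBoundary

theorem infDist_le_div_of_mem_frontier_setOf_pos {X : Type*} [PseudoMetricSpace X]
    {U F : Set X} {u v : X → ℝ} {K c : ℝ} (hU : IsOpen U) (hu : ContinuousOn u U) (hc : 0 < c)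
    (hle : ∀ y ∈ U, u y ≤ v y ∧ v y ≤ u y + K)
    (hnondeg : ∀ y ∈ U, 0 < v y → c * infDist y F ≤ v y)
    {x : X} (hxU : x ∈ U) (hx : x ∈ frontier {y | y ∈ U ∧ 0 < u y}) :
    infDist x F ≤ K / c := by
  have hux : u x ≤ 0 := nonpos_of_mem_frontier_setOf_pos hU hu hxU hx
  have hcont : ContinuousAt u x := hu.continuousAt (hU.mem_nhds hxU)
  have hbound : c * infDist x F ≤ u x + K := by
    refine ContinuousWithinAt.closure_le hx.1
      (continuous_const.mul (continuous_infDist_pt F)).continuousWithinAt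
      (hcont.add continuousAt_const).continuousWithinAt ?_
    rintro y ⟨hyU, hypos⟩
    obtain ⟨huv, hvu⟩ := hle y hyU
    exact (hnondeg y hyU (hypos.trans_le huv)).trans hvu
  rw [le_div_iff₀' hc]
  linarith

theorem stmt_17_general (n : ℕ) (R₁ R₂ : ℝ) (hR₁₂ : R₁ ≤ R₂)
    (Ω₁ Ω₂ : Set (EuclideanSpace ℝ (Fin n)))
    (hΩ₁ : Ω₁ = ball (0 : EuclideanSpace ℝ (Fin n)) R₁ \ closure (ball 0 1))
    (hΩ₂ : Ω₂ = ball (0 : EuclideanSpace ℝ (Fin n)) R₂ \ closure (ball 0 1))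
    (u₁ u₂ : EuclideanSpace ℝ (Fin n) → ℝ)
    (hu₁cont : ContinuousOn u₁ (closure Ω₁))
    (K : ℝ)
    (hord : ∀ x ∈ Ω₁, u₁ x ≤ u₂ x ∧ u₂ x ≤ u₁ x + K)
    (c : ℝ) (hc : 0 < c)
    -- non-degeneracy of `u₂`
    (hnondeg : ∀ x ∈ Ω₂, 0 < u₂ x → c * infDist x (freeBoundary Ω₂ u₂) ≤ u₂ x) :
    ∀ x ∈ freeBoundary Ω₁ u₁, infDist x (freeBoundary Ω₂ u₂) ≤ K / c := by
  have hΩ₁open : IsOpen Ω₁ := hΩ₁ ▸ isOpen_ball.sdiff isClosed_closure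
  have hΩ₁₂ : Ω₁ ⊆ Ω₂ := hΩ₁ ▸ hΩ₂ ▸ sdiff_subset_sdiff_left (ball_subset_ball hR₁₂)
  rintro x ⟨hxΩ₁, hx⟩
  exact infDist_le_div_of_mem_frontier_setOf_pos hΩ₁open (hu₁cont.mono subset_closure) hc hord
    (fun y hy => hnondeg y (hΩ₁₂ hy)) hxΩ₁ hx

theorem stmt_17 (n : ℕ) (hn : 2 ≤ n) (R₁ R₂ : ℝ) (hR₁ : 1 < R₁) (hR₁₂ : R₁ ≤ R₂)
    (Ω₁ Ω₂ : Set (EuclideanSpace ℝ (Fin n)))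
    (hΩ₁ : Ω₁ = ball (0 : EuclideanSpace ℝ (Fin n)) R₁ \ closure (ball 0 1))
    (hΩ₂ : Ω₂ = ball (0 : EuclideanSpace ℝ (Fin n)) R₂ \ closure (ball 0 1))
    (u₁ u₂ : EuclideanSpace ℝ (Fin n) → ℝ)
    (hu₁cont : ContinuousOn u₁ (closure Ω₁)) (hu₂cont : ContinuousOn u₂ (closure Ω₂))
    (K : ℝ) (hK : 0 < K)
    (hord : ∀ x ∈ Ω₁, u₁ x ≤ u₂ x ∧ u₂ x ≤ u₁ x + K)
    (hF₁ : freeBoundary Ω₁ u₁ ⊆ Ω₁)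
    (c : ℝ) (hc : 0 < c)
    -- non-degeneracy of `u₂`
    (hnondeg : ∀ x ∈ Ω₂, 0 < u₂ x → c * infDist x (freeBoundary Ω₂ u₂) ≤ u₂ x) :
    ∀ x ∈ freeBoundary Ω₁ u₁, infDist x (freeBoundary Ω₂ u₂) ≤ K / c :=
  stmt_17_general n R₁ R₂ hR₁₂ Ω₁ Ω₂ hΩ₁ hΩ₂ u₁ u₂ hu₁cont K hord c hc hnondeg
end
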